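/- arXiv:2306.01191 — 3 statements merged into one kernel-verified Lean document; each statement's English description precedes it below -/
import Mathlib

section
/- Theorem 1 (inclusion form). Under the calibration-data setup, assume 1 ≤ ⌈(1+|I|)(1−ε)⌉ ≤ |I|. Then q(E_max, ε) ≥ q(E_1, ε), and consequently for every point x the prediction set inclusion T(x, f, E_1, ε) ⊆ T(x, f, E_max, ε) holds. -/
/-- The m-th smallest element (1-indexed, with multiplicity) of a finite multiset of reals. -/
noncomputable def nthSmallest (E : Multiset ℝ) (m : ℕ) : ℝ :=
  (E.sort (· ≤ ·)).getD (m - 1) 0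

/-- The critical score q(E, ε): the ⌈(1+|E|)(1−ε)⌉-th smallest element of E. -/
noncomputable def critScore (E : Multiset ℝ) (ε : ℝ) : ℝ :=
  nthSmallest E (⌈(1 + (Multiset.card E : ℝ)) * (1 - ε)⌉.toNat)

/-- E_1 := {1 − f(x_j)_{y_j} : j ∈ I} (with multiplicity). -/
noncomputable def calE1 {X Y I : Type*} [Fintype I] (f : X → Y → ℝ) (xc : I → X)
    (yt : I → Y) : Multiset ℝ :=
  Finset.univ.val.map fun j => 1 - f (xc j) (yt j)

/-- E_max := {1 − min_{y∈S_j} f(x_j)_y : j ∈ I} (with multiplicity). -/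
noncomputable def calEmax {X Y I : Type*} [Fintype I] (f : X → Y → ℝ) (xc : I → X)
    (S : I → Finset Y) (hS : ∀ j, (S j).Nonempty) : Multiset ℝ :=
  Finset.univ.val.map fun j => 1 - (S j).inf' (hS j) (f (xc j))

lemma countP_le_of_rel_le {E F : Multiset ℝ} (h : Multiset.Rel (· ≤ ·) E F) (x : ℝ) :
    F.countP (· ≤ x) ≤ E.countP (· ≤ x) := by
  induction h with
  | zero => simp
  | @cons a b s t hab h ih =>
    rw [Multiset.countP_cons, Multiset.countP_cons]
    rcases le_or_gt b x with hbx | hbx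
    · simp [hbx, hab.trans hbx]; omega
    · simp only [if_neg (not_le.2 hbx)]
      split <;> omega

lemma countP_ge_of_sorted {l : List ℝ} (hl : l.Pairwise (· ≤ ·)) {i : ℕ} (hi : i < l.length) :
    i + 1 ≤ (l : Multiset ℝ).countP (· ≤ l.getD i 0) := by
  have hsub : ((l.take (i + 1) : List ℝ) : Multiset ℝ) ≤ (l : Multiset ℝ) :=
    (l.take_sublist (i + 1)).subperm
  have hlen : (l.take (i + 1)).length = i + 1 := by
    rw [List.length_take]; omega
  have hall : ∀ a ∈ ((l.take (i + 1) : List ℝ) : Multiset ℝ), a ≤ l.getD i 0 := by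
    intro a ha
    rw [Multiset.mem_coe] at ha
    obtain ⟨j, hj, rfl⟩ := List.getElem_of_mem ha
    rw [List.getElem_take]
    rw [List.getD_eq_getElem l 0 hi]
    rw [hlen] at hj
    exact hl.rel_get_of_le (a := ⟨j, by omega⟩) (b := ⟨i, hi⟩) (by simpa using Nat.lt_succ_iff.1 hj)
  calc i + 1 = Multiset.card ((l.take (i + 1) : List ℝ) : Multiset ℝ) := by
        simp [hlen]
    _ = Multiset.countP (· ≤ l.getD i 0) ((l.take (i + 1) : List ℝ) : Multiset ℝ) :=
        (Multiset.countP_eq_card.2 hall).symm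
    _ ≤ _ := Multiset.countP_le_of_le _ hsub

lemma getD_le_of_countP {l : List ℝ} (hl : l.Pairwise (· ≤ ·)) {i : ℕ} (hi : i < l.length)
    {x : ℝ} (h : i + 1 ≤ (l : Multiset ℝ).countP (· ≤ x)) : l.getD i 0 ≤ x := by
  by_contra hx
  push_neg at hx
  have hsplit : (l : Multiset ℝ) = ((l.take i : List ℝ) : Multiset ℝ) + ((l.drop i : List ℝ) : Multiset ℝ) := by
    rw [Multiset.coe_add, List.take_append_drop]
  have hdrop : Multiset.countP (· ≤ x) ((l.drop i : List ℝ) : Multiset ℝ) = 0 := by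
    rw [Multiset.countP_eq_zero]
    intro a ha
    rw [Multiset.mem_coe] at ha
    obtain ⟨j, hj, rfl⟩ := List.getElem_of_mem ha
    have hj' : i + j < l.length := by rw [List.length_drop] at hj; omega
    rw [List.getElem_drop]
    have : l.getD i 0 ≤ l[i + j]'hj' := by
      rw [List.getD_eq_getElem l 0 hi]
      exact hl.rel_get_of_le (a := ⟨i, hi⟩) (b := ⟨i + j, hj'⟩) (by simp)
    push_neg
    exact lt_of_lt_of_le hx this
  have htake : Multiset.countP (· ≤ x) ((l.take i : List ℝ) : Multiset ℝ) ≤ i := by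
    calc Multiset.countP (· ≤ x) ((l.take i : List ℝ) : Multiset ℝ)
        ≤ Multiset.card ((l.take i : List ℝ) : Multiset ℝ) := Multiset.countP_le_card _ _
      _ ≤ i := by simp [List.length_take]
  rw [hsplit, Multiset.countP_add, hdrop] at h
  omega

lemma nthSmallest_mono {E F : Multiset ℝ} (h : Multiset.Rel (· ≤ ·) E F) (m : ℕ) :
    nthSmallest E m ≤ nthSmallest F m := by
  have hcard : Multiset.card E = Multiset.card F := Multiset.card_eq_card_of_rel h
  unfold nthSmallest
  set i := m - 1
  have hlE : (E.sort (· ≤ ·)).length = Multiset.card E := Multiset.length_sort _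
  have hlF : (F.sort (· ≤ ·)).length = Multiset.card F := Multiset.length_sort _
  rcases lt_or_ge i (Multiset.card E) with hi | hi
  · have hiF : i < (F.sort (· ≤ ·)).length := by omega
    have hiE : i < (E.sort (· ≤ ·)).length := by omega
    have h1 : i + 1 ≤ Multiset.countP (· ≤ (F.sort (· ≤ ·)).getD i 0) F := by
      have := countP_ge_of_sorted (F.pairwise_sort (· ≤ ·)) hiF
      rwa [Multiset.sort_eq] at this
    have h2 : i + 1 ≤ Multiset.countP (· ≤ (F.sort (· ≤ ·)).getD i 0) E :=
      le_trans h1 (countP_le_of_rel_le h _)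
    refine getD_le_of_countP (E.pairwise_sort (· ≤ ·)) hiE ?_
    rwa [Multiset.sort_eq]
  · rw [List.getD_eq_default _ _ (by omega), List.getD_eq_default _ _ (by omega)]

/-- Theorem 1 (inclusion form). -/
theorem thm1_inclusion {X Y I : Type*} [Fintype Y] [Fintype I]
    (f : X → Y → ℝ) (xc : I → X) (S : I → Finset Y) (yt : I → Y)
    (hS : ∀ j, (S j).Nonempty) (hy : ∀ j, yt j ∈ S j)
    (ε : ℝ) (hε0 : 0 < ε) (hε1 : ε ≤ 1)
    (hk1 : 1 ≤ ⌈(1 + (Fintype.card I : ℝ)) * (1 - ε)⌉)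
    (hk2 : ⌈(1 + (Fintype.card I : ℝ)) * (1 - ε)⌉ ≤ (Fintype.card I : ℤ)) :
    critScore (calEmax f xc S hS) ε ≥ critScore (calE1 f xc yt) ε ∧
      ∀ x : X, {y : Y | f x y ≥ 1 - critScore (calE1 f xc yt) ε} ⊆
        {y : Y | f x y ≥ 1 - critScore (calEmax f xc S hS) ε} := by
  have hrel : Multiset.Rel (· ≤ ·) (calE1 f xc yt) (calEmax f xc S hS) := by
    unfold calE1 calEmax
    rw [Multiset.rel_map]
    refine Multiset.rel_refl_of_refl_on fun j _ => ?_
    have : (S j).inf' (hS j) (f (xc j)) ≤ f (xc j) (yt j) := Finset.inf'_le _ (hy j)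
    linarith
  have hcard : Multiset.card (calE1 f xc yt) = Fintype.card I := by
    simp only [calE1, Multiset.card_map]; rfl
  have hcard2 : Multiset.card (calEmax f xc S hS) = Fintype.card I := by
    simp only [calEmax, Multiset.card_map]; rfl
  have hmain : critScore (calE1 f xc yt) ε ≤ critScore (calEmax f xc S hS) ε := by
    unfold critScore
    rw [hcard, hcard2]
    exact nthSmallest_mono hrel _
  refine ⟨hmain, fun x y hy' => ?_⟩
  simp only [Set.mem_setOf_eq] at hy' ⊢
  linarith
end

section
/- Theorem 1 (coverage transfer form). Under the calibration-data setup, assume 1 ≤ ⌈(1+|I|)(1−ε)⌉ ≤ |I|. Let (Ω, P) be a probability space and let X_new : Ω → X and Y_new : Ω → Y be measurable random variables such that the event {Y_new ∈ T(X_new, f, E_1, ε)} and the event {Y_new ∈ T(X_new, f, E_max, ε)} are measurable. If P(Y_new ∈ T(X_new, f, E_1, ε)) ≥ 1 − ε, then P(Y_new ∈ T(X_new, f, E_max, ε)) ≥ 1 − ε. -/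
open MeasureTheory

/-!
Since `y_j ∈ S_j`, every score of `E_1` is dominated by the corresponding score of `E_max`.
Order statistics are monotone under such a pointwise domination, because the `k`-th smallest
element is `≤ c` exactly when at least `k` elements are `≤ c`. Hence `q(E_1) ≤ q(E_max)`,
so `T(x, f, E_1, ε) ⊆ T(x, f, E_max, ε)` and the coverage transfers by monotonicity of `P`.
-/

theorem List.SortedLE.getElem_le_iff_lt_countP {α : Type*} [LinearOrder α] {l : List α}
    (hl : l.SortedLE) {i : ℕ} (hi : i < l.length) (c : α) :
    l[i] ≤ c ↔ i < l.countP (· ≤ c) := by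
  constructor
  · intro hic
    have htake : (l.take (i + 1)).countP (· ≤ c) = i + 1 := by
      rw [List.countP_eq_length.mpr, List.length_take]
      · omega
      intro x hx
      obtain ⟨j, hj, rfl⟩ := List.getElem_of_mem hx
      simp only [List.getElem_take, decide_eq_true_eq]
      exact (hl.getElem_le_getElem_of_le (by simp at hj; omega)).trans hic
    have := (List.take_sublist (i + 1) l).countP_le (p := (· ≤ c))
    omega
  · intro hcount
    by_contra! hci
    have hdrop : (l.drop i).countP (· ≤ c) = 0 := by
      rw [List.countP_eq_zero]
      intro x hx
      obtain ⟨j, hj, rfl⟩ := List.getElem_of_mem hx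
      simp only [List.getElem_drop, decide_eq_true_eq, not_le]
      exact hci.trans_le (hl.getElem_le_getElem_of_le (by omega))
    have htake := List.countP_le_length (p := (· ≤ c)) (l := l.take i)
    rw [← List.take_append_drop i l, List.countP_append, hdrop] at hcount
    simp only [List.length_take] at htake
    omega

theorem nthSmallest_le_iff {E : Multiset ℝ} {k : ℕ} (hk : k - 1 < Multiset.card E) (c : ℝ) :
    nthSmallest E k ≤ c ↔ k - 1 < E.countP (· ≤ c) := by
  have hlen : k - 1 < (E.sort (· ≤ ·)).length := by rwa [Multiset.length_sort]
  rw [nthSmallest, List.getD_eq_getElem _ _ hlen,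
    (Multiset.pairwise_sort E _).sortedLE.getElem_le_iff_lt_countP hlen,
    ← Multiset.coe_countP, Multiset.sort_eq]

theorem nthSmallest_of_card_le {E : Multiset ℝ} {k : ℕ} (hk : Multiset.card E ≤ k - 1) :
    nthSmallest E k = 0 := by
  rw [nthSmallest, List.getD_eq_default _ _ (by rwa [Multiset.length_sort])]

theorem Multiset.countP_map_le_countP_map_of_le {α β : Type*} [Preorder β] [DecidableLE β]
    {m : Multiset α} {a b : α → β} (hab : ∀ x ∈ m, a x ≤ b x) (c : β) :
    (m.map b).countP (· ≤ c) ≤ (m.map a).countP (· ≤ c) := by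
  rcases m with ⟨l⟩
  simp only [Multiset.quot_mk_to_coe'', Multiset.map_coe, Multiset.coe_countP, List.countP_map]
  exact List.countP_mono_left fun x hx hbx => by
    simpa using (hab x hx).trans (by simpa using hbx)

theorem nthSmallest_map_mono {α : Type*} {m : Multiset α} {a b : α → ℝ}
    (hab : ∀ x ∈ m, a x ≤ b x) (k : ℕ) :
    nthSmallest (m.map a) k ≤ nthSmallest (m.map b) k := by
  by_cases hk : k - 1 < Multiset.card m
  · set c := nthSmallest (m.map b) k
    have hb : k - 1 < (m.map b).countP (· ≤ c) :=
      (nthSmallest_le_iff (by simpa) c).mp le_rfl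
    exact (nthSmallest_le_iff (by simpa) c).mpr
      (hb.trans_le (Multiset.countP_map_le_countP_map_of_le hab c))
  · -- out of range, both sides are the default value `0` of `List.getD`
    push Not at hk
    rw [nthSmallest_of_card_le (by simpa), nthSmallest_of_card_le (by simpa)]

theorem critScore_map_mono {α : Type*} {m : Multiset α} {a b : α → ℝ}
    (hab : ∀ x ∈ m, a x ≤ b x) (ε : ℝ) :
    critScore (m.map a) ε ≤ critScore (m.map b) ε := by
  simpa only [critScore, Multiset.card_map] using nthSmallest_map_mono hab _

theorem critScore_calE1_le_calEmax {X Y I : Type*} [Fintype I] (f : X → Y → ℝ) (xc : I → X)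
    (S : I → Finset Y) (yt : I → Y) (hS : ∀ j, (S j).Nonempty) (hy : ∀ j, yt j ∈ S j)
    (ε : ℝ) : critScore (calE1 f xc yt) ε ≤ critScore (calEmax f xc S hS) ε :=
  critScore_map_mono (fun j _ => sub_le_sub_left (Finset.inf'_le _ (hy j)) 1) ε

theorem thm1_coverage_general {X Y I Ω : Type*} [Fintype I]
    [MeasurableSpace Ω]
    (P : Measure Ω)
    (f : X → Y → ℝ) (xc : I → X) (S : I → Finset Y) (yt : I → Y)
    (hS : ∀ j, (S j).Nonempty) (hy : ∀ j, yt j ∈ S j)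
    (ε : ℝ)
    (Xnew : Ω → X) (Ynew : Ω → Y)
    (hcov : ENNReal.ofReal (1 - ε) ≤
      P {ω | f (Xnew ω) (Ynew ω) ≥ 1 - critScore (calE1 f xc yt) ε}) :
    ENNReal.ofReal (1 - ε) ≤
      P {ω | f (Xnew ω) (Ynew ω) ≥ 1 - critScore (calEmax f xc S hS) ε} := by
  have hq := critScore_calE1_le_calEmax f xc S yt hS hy ε
  refine hcov.trans (measure_mono fun ω hω => ?_)
  exact (sub_le_sub_left hq 1).trans hω

/-- Theorem 1 (coverage transfer form). -/
theorem thm1_coverage {X Y I Ω : Type*} [Fintype Y] [Fintype I]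
    [MeasurableSpace X] [MeasurableSpace Y] [MeasurableSpace Ω]
    (P : Measure Ω) [IsProbabilityMeasure P]
    (f : X → Y → ℝ) (xc : I → X) (S : I → Finset Y) (yt : I → Y)
    (hS : ∀ j, (S j).Nonempty) (hy : ∀ j, yt j ∈ S j)
    (ε : ℝ) (hε0 : 0 < ε) (hε1 : ε ≤ 1)
    (hk1 : 1 ≤ ⌈(1 + (Fintype.card I : ℝ)) * (1 - ε)⌉)
    (hk2 : ⌈(1 + (Fintype.card I : ℝ)) * (1 - ε)⌉ ≤ (Fintype.card I : ℤ))
    (Xnew : Ω → X) (Ynew : Ω → Y) (hXnew : Measurable Xnew) (hYnew : Measurable Ynew)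
    (hm1 : MeasurableSet
      {ω | f (Xnew ω) (Ynew ω) ≥ 1 - critScore (calE1 f xc yt) ε})
    (hm2 : MeasurableSet
      {ω | f (Xnew ω) (Ynew ω) ≥ 1 - critScore (calEmax f xc S hS) ε})
    (hcov : ENNReal.ofReal (1 - ε) ≤
      P {ω | f (Xnew ω) (Ynew ω) ≥ 1 - critScore (calE1 f xc yt) ε}) :
    ENNReal.ofReal (1 - ε) ≤
      P {ω | f (Xnew ω) (Ynew ω) ≥ 1 - critScore (calEmax f xc S hS) ε} :=
  thm1_coverage_general P f xc S yt hS hy ε Xnew Ynew hcov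
end

section
/- Lemma 1 (Appendix B). Let E₁ be a finite multiset of real numbers, let ε ∈ (0,1] with ε ≤ 1/4 and 1 ≤ ⌈(1+|E₁|)(1−ε)⌉ ≤ |E₁|, and set q := q(E₁, ε). Let A and B be finite multisets of reals with |A| = t_l ≥ 2, |B| = t_r ≥ t_l, every element of A being ≤ q, and every element of B being > q. Let E₂ := E₁ + A + B (multiset sum), and assume ⌈(1+|E₂|)(1−ε)⌉ ≤ |E₂|. Then q(E₂, ε) ≥ q(E₁, ε). -/
/-!
`q ≤ q(E, ε)` iff fewer than `k(E, ε)` elements of `E` lie below `q`. Passing from `E₁` to `E₂`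
adds at most `t_l` elements below `q = q(E₁, ε)` (none from `B`), while `k` grows by at least
`t_l`, because `t_l ≤ (t_l + t_r)(1 − ε)` when `t_l ≤ t_r` and `ε ≤ 1/2`.
-/

namespace List

variable {α : Type*} [LinearOrder α] [DecidableLT α]

theorem SortedLE.countP_lt_drop_eq_zero {l : List α} (hl : l.SortedLE) {i : ℕ}
    (hi : i < l.length) {q : α} (hq : q ≤ l[i]) : (l.drop i).countP (· < q) = 0 := by
  rw [countP_eq_zero]
  intro y hy
  obtain ⟨j, hj, rfl⟩ := mem_iff_getElem.1 hy
  simp only [getElem_drop, decide_eq_true_eq, not_lt]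
  exact hq.trans (hl.getElem_le_getElem_of_le (Nat.le_add_right i j))

theorem SortedLE.countP_lt_take_succ {l : List α} (hl : l.SortedLE) {i : ℕ}
    (hi : i < l.length) {q : α} (hq : l[i] < q) : (l.take (i + 1)).countP (· < q) = i + 1 := by
  rw [countP_eq_length.2, length_take_of_le hi]
  intro y hy
  obtain ⟨j, hj, rfl⟩ := mem_iff_getElem.1 hy
  rw [length_take_of_le hi] at hj
  simp only [getElem_take, decide_eq_true_eq]
  exact (hl.getElem_le_getElem_of_le (Nat.le_of_lt_succ hj)).trans_lt hq

theorem SortedLE.le_getElem_iff_countP_lt_le {l : List α} (hl : l.SortedLE) {i : ℕ}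
    (hi : i < l.length) {q : α} : q ≤ l[i] ↔ l.countP (· < q) ≤ i := by
  constructor
  · intro hq
    have hsplit := countP_append (l₁ := l.take i) (l₂ := l.drop i) (p := (· < q))
    rw [take_append_drop, hl.countP_lt_drop_eq_zero hi hq] at hsplit
    have := (countP_le_length (p := (· < q))).trans (length_take_le i l)
    omega
  · intro hc
    by_contra! hq
    have := (take_sublist (i + 1) l).countP_le (p := (· < q))
    rw [hl.countP_lt_take_succ hi hq] at this
    omega

end List

theorem le_nthSmallest_iff_countP_lt {E : Multiset ℝ} {m : ℕ} (hm1 : 1 ≤ m)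
    (hm : m ≤ Multiset.card E) {q : ℝ} : q ≤ nthSmallest E m ↔ E.countP (· < q) < m := by
  have hsorted := (E.pairwise_sort (· ≤ ·)).sortedLE
  have hi : m - 1 < (E.sort (· ≤ ·)).length := by rw [Multiset.length_sort]; omega
  rw [nthSmallest, List.getD_eq_getElem _ _ hi, hsorted.le_getElem_iff_countP_lt_le hi,
    ← Multiset.coe_countP, Multiset.sort_eq]
  omega

theorem le_critScore_iff_countP_lt {E : Multiset ℝ} {ε : ℝ}
    (hk1 : 1 ≤ ⌈(1 + (Multiset.card E : ℝ)) * (1 - ε)⌉)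
    (hk2 : ⌈(1 + (Multiset.card E : ℝ)) * (1 - ε)⌉ ≤ (Multiset.card E : ℤ)) {q : ℝ} :
    q ≤ critScore E ε ↔ (E.countP (· < q) : ℤ) < ⌈(1 + (Multiset.card E : ℝ)) * (1 - ε)⌉ := by
  rw [critScore, le_nthSmallest_iff_countP_lt (by omega) (by omega)]
  omega

theorem ceil_add_le_ceil_of_le {ε : ℝ} (hε : ε ≤ 1 / 2) (n : ℕ) {t s : ℕ} (hts : t ≤ s) :
    ⌈(1 + (n : ℝ)) * (1 - ε)⌉ + t ≤ ⌈(1 + ((n + t + s : ℕ) : ℝ)) * (1 - ε)⌉ := by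
  rw [← Int.ceil_add_intCast]
  apply Int.ceil_le_ceil
  have hts' : (t : ℝ) ≤ s := by exact_mod_cast hts
  push_cast
  nlinarith

theorem lemma1_general (E1 A B : Multiset ℝ) (ε : ℝ) (hε4 : ε ≤ 1 / 4)
    (hk1 : 1 ≤ ⌈(1 + (Multiset.card E1 : ℝ)) * (1 - ε)⌉)
    (hk2 : ⌈(1 + (Multiset.card E1 : ℝ)) * (1 - ε)⌉ ≤ (Multiset.card E1 : ℤ))
    (tl tr : ℕ) (hAcard : Multiset.card A = tl) (hBcard : Multiset.card B = tr)
    (htr : tl ≤ tr)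
    (hB : ∀ b ∈ B, critScore E1 ε < b)
    (hk2' : ⌈(1 + (Multiset.card (E1 + A + B) : ℝ)) * (1 - ε)⌉ ≤
      (Multiset.card (E1 + A + B) : ℤ)) :
    critScore (E1 + A + B) ε ≥ critScore E1 ε := by
  set q := critScore E1 ε
  have hrank := ceil_add_le_ceil_of_le (show ε ≤ 1 / 2 by linarith) (Multiset.card E1) htr
  rw [← hAcard, ← hBcard, ← Multiset.card_add, ← Multiset.card_add] at hrank
  have hE1q : (E1.countP (· < q) : ℤ) < ⌈(1 + (Multiset.card E1 : ℝ)) * (1 - ε)⌉ :=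
    (le_critScore_iff_countP_lt hk1 hk2).1 le_rfl
  have hAq : A.countP (· < q) ≤ tl := hAcard ▸ Multiset.countP_le_card _ _
  have hBq : B.countP (· < q) = 0 :=
    Multiset.countP_eq_zero.2 fun b hb => (hB b hb).not_gt
  rw [ge_iff_le, le_critScore_iff_countP_lt (by omega) hk2', Multiset.countP_add,
    Multiset.countP_add]
  push_cast
  omega

/-- Lemma 1 (Appendix B). -/
theorem lemma1 (E1 A B : Multiset ℝ) (ε : ℝ) (hε0 : 0 < ε) (hε1 : ε ≤ 1)
    (hε4 : ε ≤ 1 / 4)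
    (hk1 : 1 ≤ ⌈(1 + (Multiset.card E1 : ℝ)) * (1 - ε)⌉)
    (hk2 : ⌈(1 + (Multiset.card E1 : ℝ)) * (1 - ε)⌉ ≤ (Multiset.card E1 : ℤ))
    (tl tr : ℕ) (hAcard : Multiset.card A = tl) (hBcard : Multiset.card B = tr)
    (htl : 2 ≤ tl) (htr : tl ≤ tr)
    (hA : ∀ a ∈ A, a ≤ critScore E1 ε)
    (hB : ∀ b ∈ B, critScore E1 ε < b)
    (hk2' : ⌈(1 + (Multiset.card (E1 + A + B) : ℝ)) * (1 - ε)⌉ ≤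
      (Multiset.card (E1 + A + B) : ℤ)) :
    critScore (E1 + A + B) ε ≥ critScore E1 ε :=
  lemma1_general E1 A B ε hε4 hk1 hk2 tl tr hAcard hBcard htr hB hk2'
end
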